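/- If n ≠ m are integers, then the canonical-form integer games n and m are incomparable modulo the universe E of dead-ending games: neither n ≧ m (mod E) nor n ≦ m (mod E) holds. -/

import Mathlib

universe u

namespace SetTheory

/-- The type of pre-games, as defined in Mathlib (December 2024), since removed from Mathlib. -/
inductive PGame : Type (u + 1)
  | mk : ∀ α β : Type u, (α → PGame) → (β → PGame) → PGame

namespace PGame

def LeftMoves : PGame → Type u
  | mk l _ _ _ => l

def RightMoves : PGame → Type u
  | mk _ r _ _ => r

def moveLeft : ∀ g : PGame, LeftMoves g → PGame
  | mk _l _ L _ => L

def moveRight : ∀ g : PGame, RightMoves g → PGame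
  | mk _ _r _ R => R

inductive IsOption : PGame → PGame → Prop
  | moveLeft {x : PGame} (i : x.LeftMoves) : IsOption (x.moveLeft i) x
  | moveRight {x : PGame} (i : x.RightMoves) : IsOption (x.moveRight i) x

instance : Zero PGame :=
  ⟨⟨PEmpty, PEmpty, PEmpty.elim, PEmpty.elim⟩⟩

def neg : PGame → PGame
  | ⟨l, r, L, R⟩ => ⟨r, l, fun i => neg (R i), fun i => neg (L i)⟩

instance : Neg PGame :=
  ⟨neg⟩

noncomputable instance : Add PGame.{u} :=
  ⟨fun x y => by
    induction x generalizing y with | mk xl xr _ _ IHxl IHxr => _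
    induction y with | mk yl yr yL yR IHyl IHyr => _
    have y := mk yl yr yL yR
    refine ⟨xl ⊕ yl, xr ⊕ yr, Sum.rec ?_ ?_, Sum.rec ?_ ?_⟩
    · exact fun i => IHxl i y
    · exact IHyl
    · exact fun i => IHxr i y
    · exact IHyr⟩

end PGame

end SetTheory

open SetTheory

namespace Misere

/-- `F` is a follower of `G`: reachable from `G` by a (possibly empty) sequence of moves. -/
def Follower (F G : PGame) : Prop := Relation.ReflTransGen PGame.IsOption F G

def IsLeftEnd (G : PGame) : Prop := IsEmpty G.LeftMoves
def IsRightEnd (G : PGame) : Prop := IsEmpty G.RightMoves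

/-- A dead left end: every follower (including itself) is a left end. -/
def DeadLeftEnd (G : PGame) : Prop := ∀ F, Follower F G → IsLeftEnd F
def DeadRightEnd (G : PGame) : Prop := ∀ F, Follower F G → IsRightEnd F
def DeadEnd (G : PGame) : Prop := DeadLeftEnd G ∨ DeadRightEnd G

/-- A game is dead-ending if every end follower is a dead end. -/
def DeadEnding (G : PGame) : Prop :=
  ∀ F, Follower F G → (IsLeftEnd F → DeadLeftEnd F) ∧ (IsRightEnd F → DeadRightEnd F)

/-- The universe of dead-ending games. -/
def E : Set PGame := {G | DeadEnding G}

/-- `(misereWins G).1` : Left, moving first, wins `G` under misère play;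
    `(misereWins G).2` : Right, moving first, wins `G` under misère play. -/
def misereWins : PGame → Prop × Prop
  | PGame.mk l r L R =>
      (IsEmpty l ∨ ∃ i, ¬ (misereWins (L i)).2,
       IsEmpty r ∨ ∃ j, ¬ (misereWins (R j)).1)

def LeftWinsGF (G : PGame) : Prop := (misereWins G).1
def RightWinsGF (G : PGame) : Prop := (misereWins G).2

inductive MOutcome : Type
  | L | N | P | R
deriving DecidableEq

/-- Partial order on misère outcomes: `R` minimal, `L` maximal, `N` and `P` incomparable. -/
def MOutcome.le : MOutcome → MOutcome → Prop
  | .R, _ => True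
  | _, .L => True
  | a, b => a = b

instance : LE MOutcome := ⟨MOutcome.le⟩

/-- The misère outcome of a game. -/
noncomputable def outcome (G : PGame) : MOutcome := by
  classical
  exact if LeftWinsGF G then (if RightWinsGF G then .N else .L)
        else (if RightWinsGF G then .R else .P)

/-- `G ≡ H (mod U)`. -/
def equivMod (U : Set PGame) (G H : PGame) : Prop :=
  ∀ X ∈ U, outcome (G + X) = outcome (H + X)

/-- `G ≧ H (mod U)`. -/
def geMod (U : Set PGame) (G H : PGame) : Prop :=
  ∀ X ∈ U, outcome (H + X) ≤ outcome (G + X)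

/-- `LeftChain G n`: there is a sequence of `n` consecutive Left moves from `G`
ending at the zero position. -/
inductive LeftChain : PGame → ℕ → Prop
  | zero (G : PGame) : IsLeftEnd G → IsRightEnd G → LeftChain G 0
  | succ (G : PGame) (i : G.LeftMoves) (n : ℕ) :
      LeftChain (G.moveLeft i) n → LeftChain G (n + 1)

inductive RightChain : PGame → ℕ → Prop
  | zero (G : PGame) : IsLeftEnd G → IsRightEnd G → RightChain G 0
  | succ (G : PGame) (j : G.RightMoves) (n : ℕ) :
      RightChain (G.moveRight j) n → RightChain G (n + 1)

/-- Left-length: minimum number of consecutive Left moves needed to reach zero. -/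
noncomputable def leftLength (G : PGame) : ℕ := sInf {n | LeftChain G n}

/-- Right-length: minimum number of consecutive Right moves needed to reach zero. -/
noncomputable def rightLength (G : PGame) : ℕ := sInf {n | RightChain G n}

/-- Normal-play canonical form of a nonnegative integer. -/
def natGame : ℕ → PGame
  | 0 => 0
  | n + 1 => PGame.mk PUnit PEmpty (fun _ => natGame n) PEmpty.elim

/-- Normal-play canonical form of an integer (negatives are conjugates). -/
def intGame (n : ℤ) : PGame :=
  if 0 ≤ n then natGame n.toNat else -natGame (-n).toNat

/-- Normal-play canonical form of the dyadic rational `m / 2 ^ j`. -/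
def dyadicGame : ℤ → ℕ → PGame
  | m, 0 => intGame m
  | m, j + 1 =>
      if m % 2 = 0 then dyadicGame (m / 2) j
      else PGame.mk PUnit PUnit (fun _ => dyadicGame ((m - 1) / 2) j)
            (fun _ => dyadicGame ((m + 1) / 2) j)

/-- The closure of dead ends: finite disjunctive sums of dead ends. -/
def DeadEndClosure : Set PGame :=
  {G | ∃ l : List PGame, (∀ x ∈ l, DeadEnd x) ∧ G = l.sum}

end Misere

/-!
Integers, and sums of integers, are *integer-like*: every Left option of a position worth `a`
is worth `a - 1`, every Right option is worth `a + 1`, and a player who is ahead always has a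
move. Misère play on such a position `G` is decided by `a` alone, and so is misère play on
`G + λ_t` (with `λ_0 = -1`): its outcome is `L` exactly when `a ≤ -2`, or `a = t`, or `a = -1`
and `t = 0`. For `n < m` the dead-ending test game `X = -n + λ_t` shifts `n` to `0` and `m` to
`m - n > 0`; with `t = m - n` only `m + X` has outcome `L`, with `t = 0` only `n + X` has. As
`L` is the top outcome, this refutes both `n ≧ m` and `m ≧ n` modulo `E`.
-/

namespace SetTheory.PGame

@[elab_as_elim]
theorem moveRecOn {motive : PGame → Prop} (G : PGame)
    (ind : ∀ G, (∀ i, motive (G.moveLeft i)) → (∀ j, motive (G.moveRight j)) → motive G) :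
    motive G :=
  G.rec fun l r L R => ind (mk l r L R)

theorem isOption_iff {F G : PGame} :
    IsOption F G ↔ (∃ i, F = G.moveLeft i) ∨ ∃ j, F = G.moveRight j := by
  constructor
  · rintro (i | j)
    exacts [Or.inl ⟨i, rfl⟩, Or.inr ⟨j, rfl⟩]
  · rintro (⟨i, rfl⟩ | ⟨j, rfl⟩)
    exacts [.moveLeft i, .moveRight j]

theorem isEmpty_leftMoves_add {G H : PGame} :
    IsEmpty (G + H).LeftMoves ↔ IsEmpty G.LeftMoves ∧ IsEmpty H.LeftMoves := by
  cases G; cases H; exact isEmpty_sum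

theorem isEmpty_rightMoves_add {G H : PGame} :
    IsEmpty (G + H).RightMoves ↔ IsEmpty G.RightMoves ∧ IsEmpty H.RightMoves := by
  cases G; cases H; exact isEmpty_sum

theorem exists_moveLeft_add {G H : PGame} {P : PGame → Prop} :
    (∃ i, P ((G + H).moveLeft i)) ↔ (∃ i, P (G.moveLeft i + H)) ∨ ∃ j, P (G + H.moveLeft j) := by
  cases G; cases H; exact Sum.exists

theorem exists_moveRight_add {G H : PGame} {P : PGame → Prop} :
    (∃ i, P ((G + H).moveRight i)) ↔ (∃ i, P (G.moveRight i + H)) ∨ ∃ j, P (G + H.moveRight j) := by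
  cases G; cases H; exact Sum.exists

theorem forall_moveLeft_add {G H : PGame} {P : PGame → Prop} :
    (∀ i, P ((G + H).moveLeft i)) ↔ (∀ i, P (G.moveLeft i + H)) ∧ ∀ j, P (G + H.moveLeft j) := by
  cases G; cases H; exact Sum.forall

theorem forall_moveRight_add {G H : PGame} {P : PGame → Prop} :
    (∀ i, P ((G + H).moveRight i)) ↔ (∀ i, P (G.moveRight i + H)) ∧ ∀ j, P (G + H.moveRight j) := by
  cases G; cases H; exact Sum.forall

end SetTheory.PGame

namespace Misere

open PGame

theorem leftWinsGF_iff {G : PGame} :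
    LeftWinsGF G ↔ IsLeftEnd G ∨ ∃ i, ¬ RightWinsGF (G.moveLeft i) := by
  cases G; rfl

theorem rightWinsGF_iff {G : PGame} :
    RightWinsGF G ↔ IsRightEnd G ∨ ∃ j, ¬ LeftWinsGF (G.moveRight j) := by
  cases G; rfl

theorem leftWinsGF_add {G H : PGame} :
    LeftWinsGF (G + H) ↔ (IsLeftEnd G ∧ IsLeftEnd H) ∨
      (∃ i, ¬ RightWinsGF (G.moveLeft i + H)) ∨ ∃ j, ¬ RightWinsGF (G + H.moveLeft j) := by
  rw [leftWinsGF_iff, IsLeftEnd, isEmpty_leftMoves_add,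
    exists_moveLeft_add (P := fun X => ¬ RightWinsGF X)]; rfl

theorem rightWinsGF_add {G H : PGame} :
    RightWinsGF (G + H) ↔ (IsRightEnd G ∧ IsRightEnd H) ∨
      (∃ i, ¬ LeftWinsGF (G.moveRight i + H)) ∨ ∃ j, ¬ LeftWinsGF (G + H.moveRight j) := by
  rw [rightWinsGF_iff, IsRightEnd, isEmpty_rightMoves_add,
    exists_moveRight_add (P := fun X => ¬ LeftWinsGF X)]; rfl

theorem misereWins_add_assoc (G H K : PGame) :
    misereWins (G + H + K) = misereWins (G + (H + K)) := by
  induction G using moveRecOn generalizing H K with | ind G ihL ihR =>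
  induction H using moveRecOn generalizing K with | ind H jhL jhR =>
  induction K using moveRecOn with | ind K khL khR =>
  refine Prod.ext (propext ?_) (propext ?_)
  · change LeftWinsGF _ ↔ LeftWinsGF _
    rw [leftWinsGF_add, leftWinsGF_add, exists_moveLeft_add (P := fun X => ¬ RightWinsGF (X + _)),
      exists_moveLeft_add (P := fun X => ¬ RightWinsGF (_ + X))]
    simp only [IsLeftEnd, isEmpty_leftMoves_add, RightWinsGF, ihL, jhL, khL]
    tauto
  · change RightWinsGF _ ↔ RightWinsGF _
    rw [rightWinsGF_add, rightWinsGF_add, exists_moveRight_add (P := fun X => ¬ LeftWinsGF (X + _)),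
      exists_moveRight_add (P := fun X => ¬ LeftWinsGF (_ + X))]
    simp only [IsRightEnd, isEmpty_rightMoves_add, LeftWinsGF, ihR, jhR, khR]
    tauto

theorem outcome_add_assoc (G H K : PGame) : outcome (G + H + K) = outcome (G + (H + K)) := by
  unfold outcome LeftWinsGF RightWinsGF
  rw [misereWins_add_assoc]

theorem outcome_eq_L_iff {G : PGame} : outcome G = .L ↔ LeftWinsGF G ∧ ¬ RightWinsGF G := by
  unfold outcome
  split_ifs <;> simp_all

theorem MOutcome.L_le_iff {o : MOutcome} : .L ≤ o ↔ o = .L := by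
  cases o <;> simp [LE.le, MOutcome.le]

theorem not_geMod_of_outcome {U : Set PGame} {G H X : PGame} (hX : X ∈ U)
    (hH : outcome (H + X) = .L) (hG : outcome (G + X) ≠ .L) : ¬ geMod U G H :=
  fun hGH => hG (MOutcome.L_le_iff.1 (hH ▸ hGH X hX))

inductive IntLike : ℤ → PGame → Prop
  | intro {a : ℤ} {G : PGame}
      (moveLeft : ∀ i, IntLike (a - 1) (G.moveLeft i))
      (moveRight : ∀ j, IntLike (a + 1) (G.moveRight j))
      (not_isLeftEnd : 0 < a → ¬ IsLeftEnd G)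
      (not_isRightEnd : a < 0 → ¬ IsRightEnd G) : IntLike a G

theorem intLike_zero : IntLike 0 0 :=
  ⟨fun i => i.elim, fun j => j.elim, fun h => absurd h (lt_irrefl 0), fun h => absurd h (lt_irrefl 0)⟩

theorem intLike_natGame (j : ℕ) : IntLike j (natGame j) := by
  induction j with
  | zero => exact intLike_zero
  | succ j ih =>
    refine ⟨fun _ => ?_, fun j => j.elim, fun _ h => h.false ⟨⟩, fun h => by omega⟩
    rwa [Nat.cast_succ, add_sub_cancel_right]

theorem intLike_neg_natGame (j : ℕ) : IntLike (-j) (-natGame j) := by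
  induction j with
  | zero => exact ⟨fun i => i.elim, fun j => j.elim, fun h => by omega, fun h => by omega⟩
  | succ j ih =>
    refine ⟨fun i => i.elim, fun _ => ?_, fun h => by omega, fun _ h => h.false ⟨⟩⟩
    rwa [Nat.cast_succ, neg_add, neg_add_cancel_right]

theorem intLike_intGame (c : ℤ) : IntLike c (intGame c) := by
  unfold Misere.intGame
  split_ifs with hc
  · simpa [Int.toNat_of_nonneg hc] using intLike_natGame c.toNat
  · simpa [Int.toNat_of_nonneg (by omega : 0 ≤ -c)] using intLike_neg_natGame (-c).toNat

theorem IntLike.add {a b : ℤ} {G H : PGame} (hG : IntLike a G) (hH : IntLike b H) :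
    IntLike (a + b) (G + H) := by
  induction hG generalizing b H with
  | @intro a G _ _ hGL hGR ihL ihR =>
  induction hH with
  | @intro b H hHl hHr hHL hHR jhL jhR =>
  have hH : IntLike b H := ⟨hHl, hHr, hHL, hHR⟩
  refine ⟨forall_moveLeft_add.2 ⟨fun i => ?_, fun j => ?_⟩,
    forall_moveRight_add.2 ⟨fun i => ?_, fun j => ?_⟩, fun h => ?_, fun h => ?_⟩
  · simpa only [sub_add_eq_add_sub] using ihL i hH
  · simpa only [add_sub_assoc] using jhL j
  · simpa only [add_right_comm] using ihR i hH
  · simpa only [add_assoc] using jhR j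
  · rw [IsLeftEnd, isEmpty_leftMoves_add]
    rcases lt_or_ge 0 a with ha | ha
    exacts [fun h' => hGL ha h'.1, fun h' => hHL (by omega) h'.2]
  · rw [IsRightEnd, isEmpty_rightMoves_add]
    rcases lt_or_ge a 0 with ha | ha
    exacts [fun h' => hGR ha h'.1, fun h' => hHR (by omega) h'.2]

theorem IntLike.winsGF {a : ℤ} {G : PGame} (h : IntLike a G) :
    (LeftWinsGF G ↔ a ≤ 0) ∧ (RightWinsGF G ↔ 0 ≤ a) := by
  induction h with
  | @intro a G _ _ hL hR ihL ihR =>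
  have hl : ∀ i, RightWinsGF (G.moveLeft i) ↔ 0 ≤ a - 1 := fun i => (ihL i).2
  have hr : ∀ j, LeftWinsGF (G.moveRight j) ↔ a + 1 ≤ 0 := fun j => (ihR j).1
  rw [leftWinsGF_iff, rightWinsGF_iff]
  simp only [hl, hr, exists_const_iff, IsLeftEnd, IsRightEnd] at hL hR ⊢
  grind [not_isEmpty_iff]

/-- `lam 0 = {| 0}` is the canonical form of `-1`, so `lam t` is the paper's `λ_t` for `t ≥ 1`. -/
def lam : ℕ → PGame.{u}
  | 0 => mk PEmpty PUnit PEmpty.elim fun _ => 0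
  | t + 1 => mk PUnit PUnit (fun _ => 0) fun _ => lam t

theorem isLeftEnd_lam {t : ℕ} : IsLeftEnd (lam t) ↔ t = 0 := by
  cases t
  · exact iff_of_true (inferInstanceAs (IsEmpty PEmpty)) rfl
  · exact iff_of_false (fun h => h.false ⟨⟩) (Nat.succ_ne_zero _)

theorem not_isRightEnd_lam (t : ℕ) : ¬ IsRightEnd (lam t) := by
  cases t <;> exact fun h => h.false ⟨⟩

theorem exists_moveLeft_lam {t : ℕ} {P : PGame → Prop} :
    (∃ i, P ((lam t).moveLeft i)) ↔ t ≠ 0 ∧ P 0 := by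
  cases t
  · exact ⟨fun ⟨i, _⟩ => i.elim, fun h => absurd rfl h.1⟩
  · exact ⟨fun ⟨_, h⟩ => ⟨Nat.succ_ne_zero _, h⟩, fun h => ⟨⟨⟩, h.2⟩⟩

theorem exists_moveRight_lam_zero {P : PGame → Prop} :
    (∃ j, P ((lam 0).moveRight j)) ↔ P 0 :=
  ⟨fun ⟨_, h⟩ => h, fun h => ⟨⟨⟩, h⟩⟩

theorem exists_moveRight_lam_succ {t : ℕ} {P : PGame → Prop} :
    (∃ j, P ((lam (t + 1)).moveRight j)) ↔ P (lam t) :=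
  ⟨fun ⟨_, h⟩ => h, fun h => ⟨⟨⟩, h⟩⟩

theorem IntLike.winsGF_add_lam {a : ℤ} {G : PGame} (h : IntLike a G) (t : ℕ) :
    (LeftWinsGF (G + lam t) ↔ a ≤ -1 ∨ a = t ∨ a = t + 1) ∧
      (RightWinsGF (G + lam t) ↔ -1 ≤ a ∧ a ≠ t - 1 ∧ a ≠ t) := by
  induction h generalizing t with
  | @intro a G hl hr hL hR ihL ihR =>
  have hG0 := (IntLike.add ⟨hl, hr, hL, hR⟩ intLike_zero).winsGF
  rw [add_zero] at hG0
  have left : ∀ t : ℕ, LeftWinsGF (G + lam t) ↔ a ≤ -1 ∨ a = t ∨ a = t + 1 := by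
    intro t
    have hopt : ∀ i, RightWinsGF (G.moveLeft i + lam t) ↔ -1 ≤ a - 1 ∧ a - 1 ≠ t - 1 ∧ a - 1 ≠ t :=
      fun i => (ihL i t).2
    rw [leftWinsGF_add, isLeftEnd_lam, exists_moveLeft_lam (P := fun X => ¬ RightWinsGF (G + X)),
      hG0.2]
    simp only [hopt, exists_const_iff, IsLeftEnd] at hL ⊢
    grind [not_isEmpty_iff]
  refine ⟨left t, ?_⟩
  have hopt : ∀ j, LeftWinsGF (G.moveRight j + lam t) ↔ a + 1 ≤ -1 ∨ a + 1 = t ∨ a + 1 = t + 1 :=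
    fun j => (ihR j t).1
  have hlam : (∃ j, ¬ LeftWinsGF (G + (lam t).moveRight j)) ↔ ¬ (a ≤ -1 ∨ a = t - 1 ∨ a = t) := by
    cases t
    · rw [exists_moveRight_lam_zero (P := fun X => ¬ LeftWinsGF (G + X)), hG0.1]
      omega
    · rw [exists_moveRight_lam_succ (P := fun X => ¬ LeftWinsGF (G + X)), left]
      push_cast
      omega
  rw [rightWinsGF_add, hlam]
  simp only [not_isRightEnd_lam, and_false, false_or]
  simp only [hopt, exists_const_iff, IsRightEnd] at hR ⊢
  grind [not_isEmpty_iff]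

theorem IntLike.outcome_add_lam_eq_L_iff {a : ℤ} {G : PGame} (h : IntLike a G) (t : ℕ) :
    outcome (G + lam t) = .L ↔ a ≤ -2 ∨ a = t ∨ (a = -1 ∧ t = 0) := by
  rw [outcome_eq_L_iff, (h.winsGF_add_lam t).1, (h.winsGF_add_lam t).2]
  omega

theorem isOption_add {F G H : PGame} (h : IsOption F (G + H)) :
    (∃ G', IsOption G' G ∧ F = G' + H) ∨ ∃ H', IsOption H' H ∧ F = G + H' := by
  rw [isOption_iff, exists_moveLeft_add (P := (F = ·)), exists_moveRight_add (P := (F = ·))] at h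
  rcases h with (⟨i, rfl⟩ | ⟨j, rfl⟩) | (⟨i, rfl⟩ | ⟨j, rfl⟩)
  exacts [.inl ⟨_, .moveLeft i, rfl⟩, .inr ⟨_, .moveLeft j, rfl⟩,
    .inl ⟨_, .moveRight i, rfl⟩, .inr ⟨_, .moveRight j, rfl⟩]

theorem follower_add {F G H : PGame} (h : Follower F (G + H)) :
    ∃ G' H', Follower G' G ∧ Follower H' H ∧ F = G' + H' := by
  induction h using Relation.ReflTransGen.head_induction_on with
  | refl => exact ⟨G, H, .refl, .refl, rfl⟩
  | head hopt _ ih =>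
    obtain ⟨G', H', hG', hH', rfl⟩ := ih
    rcases isOption_add hopt with ⟨G'', hG'', rfl⟩ | ⟨H'', hH'', rfl⟩
    exacts [⟨G'', H', .head hG'' hG', hH', rfl⟩, ⟨G', H'', hG', .head hH'' hH', rfl⟩]

theorem deadLeftEnd_add {G H : PGame} (hG : DeadLeftEnd G) (hH : DeadLeftEnd H) :
    DeadLeftEnd (G + H) := by
  intro F hF
  obtain ⟨G', H', hG', hH', rfl⟩ := follower_add hF
  exact isEmpty_leftMoves_add.2 ⟨hG G' hG', hH H' hH'⟩

theorem deadRightEnd_add {G H : PGame} (hG : DeadRightEnd G) (hH : DeadRightEnd H) :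
    DeadRightEnd (G + H) := by
  intro F hF
  obtain ⟨G', H', hG', hH', rfl⟩ := follower_add hF
  exact isEmpty_rightMoves_add.2 ⟨hG G' hG', hH H' hH'⟩

theorem deadEnding_add {G H : PGame} (hG : DeadEnding G) (hH : DeadEnding H) :
    DeadEnding (G + H) := by
  intro F hF
  obtain ⟨G', H', hG', hH', rfl⟩ := follower_add hF
  refine ⟨fun hL => ?_, fun hR => ?_⟩
  · obtain ⟨hL₁, hL₂⟩ := isEmpty_leftMoves_add.1 hL
    exact deadLeftEnd_add ((hG G' hG').1 hL₁) ((hH H' hH').1 hL₂)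
  · obtain ⟨hR₁, hR₂⟩ := isEmpty_rightMoves_add.1 hR
    exact deadRightEnd_add ((hG G' hG').2 hR₁) ((hH H' hH').2 hR₂)

theorem forall_follower_iff {P : PGame → Prop} {G : PGame} :
    (∀ F, Follower F G → P F) ↔ P G ∧ (∀ i, ∀ F, Follower F (G.moveLeft i) → P F) ∧
      ∀ j, ∀ F, Follower F (G.moveRight j) → P F := by
  refine ⟨fun h => ⟨h G .refl, fun i F hF => h F (hF.tail (.moveLeft i)),
    fun j F hF => h F (hF.tail (.moveRight j))⟩, fun ⟨hG, hl, hr⟩ F hF => ?_⟩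
  rcases Relation.ReflTransGen.cases_tail hF with rfl | ⟨G', hF', (i | j)⟩
  exacts [hG, hl i F hF', hr j F hF']

theorem deadLeftEnd_iff {G : PGame} :
    DeadLeftEnd G ↔
      IsLeftEnd G ∧ (∀ i, DeadLeftEnd (G.moveLeft i)) ∧ ∀ j, DeadLeftEnd (G.moveRight j) :=
  forall_follower_iff

theorem deadRightEnd_iff {G : PGame} :
    DeadRightEnd G ↔
      IsRightEnd G ∧ (∀ i, DeadRightEnd (G.moveLeft i)) ∧ ∀ j, DeadRightEnd (G.moveRight j) :=
  forall_follower_iff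

theorem deadEnding_iff {G : PGame} :
    DeadEnding G ↔ ((IsLeftEnd G → DeadLeftEnd G) ∧ (IsRightEnd G → DeadRightEnd G)) ∧
      (∀ i, DeadEnding (G.moveLeft i)) ∧ ∀ j, DeadEnding (G.moveRight j) :=
  forall_follower_iff

theorem deadLeftEnd_of_isLeftEnd_of_isRightEnd {G : PGame} (hL : IsLeftEnd G)
    (hR : IsRightEnd G) : DeadLeftEnd G :=
  deadLeftEnd_iff.2 ⟨hL, hL.elim, hR.elim⟩

theorem deadRightEnd_of_isLeftEnd_of_isRightEnd {G : PGame} (hL : IsLeftEnd G)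
    (hR : IsRightEnd G) : DeadRightEnd G :=
  deadRightEnd_iff.2 ⟨hR, hL.elim, hR.elim⟩

theorem deadRightEnd_natGame (j : ℕ) : DeadRightEnd (natGame j) := by
  induction j with
  | zero => exact deadRightEnd_of_isLeftEnd_of_isRightEnd ⟨fun i => i.elim⟩ ⟨fun i => i.elim⟩
  | succ j ih => exact deadRightEnd_iff.2 ⟨⟨fun i => i.elim⟩, fun _ => ih, fun i => i.elim⟩

theorem deadLeftEnd_neg_natGame (j : ℕ) : DeadLeftEnd (-natGame j) := by
  induction j with
  | zero => exact deadLeftEnd_of_isLeftEnd_of_isRightEnd ⟨fun i => i.elim⟩ ⟨fun i => i.elim⟩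
  | succ j ih => exact deadLeftEnd_iff.2 ⟨⟨fun i => i.elim⟩, fun i => i.elim, fun _ => ih⟩

theorem deadEnding_natGame (j : ℕ) : DeadEnding (natGame j) := by
  induction j with
  | zero =>
    exact deadEnding_iff.2 ⟨⟨fun hL => deadLeftEnd_of_isLeftEnd_of_isRightEnd hL ⟨fun i => i.elim⟩,
      fun _ => deadRightEnd_natGame 0⟩, fun i => i.elim, fun i => i.elim⟩
  | succ j ih =>
    exact deadEnding_iff.2 ⟨⟨fun h => (h.false ⟨⟩).elim, fun _ => deadRightEnd_natGame (j + 1)⟩,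
      fun _ => ih, fun i => i.elim⟩

theorem deadEnding_neg_natGame (j : ℕ) : DeadEnding (-natGame j) := by
  induction j with
  | zero =>
    exact deadEnding_iff.2 ⟨⟨fun _ => deadLeftEnd_neg_natGame 0,
      fun hR => deadRightEnd_of_isLeftEnd_of_isRightEnd ⟨fun i => i.elim⟩ hR⟩,
      fun i => i.elim, fun i => i.elim⟩
  | succ j ih =>
    exact deadEnding_iff.2 ⟨⟨fun _ => deadLeftEnd_neg_natGame (j + 1), fun h => (h.false ⟨⟩).elim⟩,
      fun i => i.elim, fun _ => ih⟩

theorem deadEnding_intGame (c : ℤ) : DeadEnding (intGame c) := by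
  unfold intGame
  split_ifs
  exacts [deadEnding_natGame _, deadEnding_neg_natGame _]

theorem deadEnding_lam (t : ℕ) : DeadEnding (lam t) := by
  induction t with
  | zero =>
    have hdead : DeadLeftEnd (lam 0) := deadLeftEnd_iff.2 ⟨⟨fun i => i.elim⟩, fun i => i.elim,
      fun _ => deadLeftEnd_of_isLeftEnd_of_isRightEnd ⟨fun i => i.elim⟩ ⟨fun i => i.elim⟩⟩
    exact deadEnding_iff.2 ⟨⟨fun _ => hdead, fun h => (h.false ⟨⟩).elim⟩, fun i => i.elim,
      fun _ => deadEnding_natGame 0⟩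
  | succ t ih =>
    exact deadEnding_iff.2 ⟨⟨fun h => (h.false ⟨⟩).elim, fun h => (h.false ⟨⟩).elim⟩,
      fun _ => deadEnding_natGame 0, fun _ => ih⟩

theorem outcome_intGame_add_intGame_add_lam_eq_L_iff (c k : ℤ) (t : ℕ) :
    outcome (intGame c + (intGame k + lam t)) = .L ↔
      c + k ≤ -2 ∨ c + k = t ∨ (c + k = -1 ∧ t = 0) := by
  rw [← outcome_add_assoc]
  exact ((intLike_intGame c).add (intLike_intGame k)).outcome_add_lam_eq_L_iff t

theorem intGame_add_lam_mem_E (k : ℤ) (t : ℕ) : intGame k + lam t ∈ E :=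
  deadEnding_add (deadEnding_intGame k) (deadEnding_lam t)

theorem not_geMod_E_intGame_of_lt {a b : ℤ} (h : a < b) : ¬ geMod E (intGame a) (intGame b) :=
  not_geMod_of_outcome (intGame_add_lam_mem_E (-a) (b - a).toNat)
    ((outcome_intGame_add_intGame_add_lam_eq_L_iff _ _ _).2 (by omega))
    (fun hL => by have := (outcome_intGame_add_intGame_add_lam_eq_L_iff _ _ _).1 hL; omega)

theorem not_geMod_E_intGame_of_gt {a b : ℤ} (h : b < a) : ¬ geMod E (intGame a) (intGame b) :=
  not_geMod_of_outcome (intGame_add_lam_mem_E (-b) 0)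
    ((outcome_intGame_add_intGame_add_lam_eq_L_iff _ _ _).2 (by omega))
    (fun hL => by have := (outcome_intGame_add_intGame_add_lam_eq_L_iff _ _ _).1 hL; omega)

end Misere

open Misere SetTheory PGame

/-- distinct integers are incomparable modulo E. -/
theorem stmt8 (n m : ℤ) (h : n ≠ m) :
    ¬ geMod E (intGame n) (intGame m) ∧ ¬ geMod E (intGame m) (intGame n) := by
  rcases h.lt_or_gt with h | h
  · exact ⟨not_geMod_E_intGame_of_lt h, not_geMod_E_intGame_of_gt h⟩
  · exact ⟨not_geMod_E_intGame_of_gt h, not_geMod_E_intGame_of_lt h⟩
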